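/- Let A = {a,b,c}, m ≥ 4, and x₁, x₂, y₁, y₂ ≥ 1 with x₁ + x₂ = y₁ + y₂ = m - 3 and y₂ ≤ x₁ ≤ x₂ ≤ y₁. Then there exist positive integers p, q with p + q = m - 1 such that the two-sided infinite word of period 2(m-1) obtained by repeating a^p u_q a^p ū_q avoids the set {b⋄^{m-2}b, c⋄^{m-2}c, a⋄^{m-2}b, a⋄^{m-2}c, a⋄^{x₁}a⋄^{x₂}a, b⋄^{y₁}c⋄^{y₂}c}, where u_q is the length-q prefix of the one-sided infinite word (b^{y₂+1} c^{y₂+1})^ℕ and ū_q is obtained from u_q by exchanging b and c. -/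
import Mathlib


/-- The three-letter alphabet. -/
inductive ABC | a | b | c
deriving DecidableEq
open ABC

/-- A partial word of length `m` over alphabet `A`. -/
abbrev PW (m : ℕ) (A : Type) := Fin m → Option A

/-- A two-sided infinite word `w` meets a partial word `u`. -/
def Meets {m : ℕ} {A : Type} (w : ℤ → A) (u : PW m A) : Prop :=
  ∃ i : ℤ, ∀ j : Fin m, ∀ x : A, u j = some x → w (i + (j : ℕ)) = x

/-- A set of partial words is unavoidable over `A`. -/
def Unavoidable {m : ℕ} {A : Type} (X : Set (PW m A)) : Prop :=
  ∀ w : ℤ → A, ∃ u ∈ X, Meets w u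

/-- A set of partial words is avoidable over `A`. -/
def Avoidable {m : ℕ} {A : Type} (X : Set (PW m A)) : Prop :=
  ∃ w : ℤ → A, ∀ u ∈ X, ¬ Meets w u

/-- The partial word `x ⋄^(m-2) y` of length `m`: first letter `x`, last letter `y`,
holes in between. -/
def oneHole {A : Type} (m : ℕ) (x y : A) : PW m A :=
  fun j => if (j : ℕ) = 0 then some x else if (j : ℕ) = m - 1 then some y else none

/-- The partial word `x ⋄^(p-1) d ⋄^(m-p-2) y` of length `m`: first letter `x`,
letter `d` at position `p`, last letter `y`, holes elsewhere. -/
def twoDef {A : Type} (m : ℕ) (x d y : A) (p : ℕ) : PW m A :=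
  fun j => if (j : ℕ) = 0 then some x else if (j : ℕ) = p then some d
    else if (j : ℕ) = m - 1 then some y else none

/-- The two-sided infinite word of period `P` repeating the block `f` (given on `[0, P)`). -/
def periodic {A : Type} (P : ℕ) (f : ℕ → A) : ℤ → A :=
  fun i => f ((i % (P : ℤ)).toNat)

/-- Swap b and c, fixing a. -/
def comp : ABC → ABC
  | a => a | b => c | c => b

/-- The one-sided infinite word (b^(r) c^(r))^ℕ. -/
def bcblock (r : ℕ) : ℕ → ABC := fun n => if n % (2 * r) < r then b else c

/- ----------------- auxiliary definitions and lemmas ----------------- -/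

/-- The block function used in the theorem, with `p := y₂+1`, `q := y₁+1`. -/
def Fw (y₁ y₂ : ℕ) : ℕ → ABC := fun n =>
  if n < y₂ + 1 then a
  else if n < y₂ + 1 + (y₁ + 1) then bcblock (y₂ + 1) (n - (y₂ + 1))
  else if n < 2 * (y₂ + 1) + (y₁ + 1) then a
  else comp (bcblock (y₂ + 1) (n - (2 * (y₂ + 1) + (y₁ + 1))))

lemma comp_comp (x : ABC) : comp (comp x) = x := by cases x <;> rfl

lemma bcb_ne_a (r t : ℕ) : bcblock r t ≠ a := by
  unfold bcblock; split <;> decide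

lemma comp_bcb_ne_a (r t : ℕ) : comp (bcblock r t) ≠ a := by
  unfold bcblock; split <;> decide

lemma bcb_b_iff (r t : ℕ) : bcblock r t = b ↔ t % (2 * r) < r := by
  unfold bcblock
  split
  next hc => exact iff_of_true rfl hc
  next hc => exact iff_of_false (by decide) hc

lemma bcb_c_iff (r t : ℕ) : bcblock r t = c ↔ ¬ t % (2 * r) < r := by
  unfold bcblock
  split
  next hc => exact iff_of_false (by decide) (not_not_intro hc)
  next hc => exact iff_of_true rfl hc

lemma comp_eq_b (x : ABC) : comp x = b ↔ x = c := by cases x <;> decide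

lemma bcblock_flip_b (r t : ℕ) (hr : 0 < r) (ht : t % (2 * r) < r) :
    bcblock r (t + r) = c := by
  unfold bcblock
  rw [Nat.add_mod, Nat.mod_eq_of_lt (show r < 2 * r by omega),
    Nat.mod_eq_of_lt (show t % (2 * r) + r < 2 * r by omega), if_neg (by omega)]

lemma bcblock_flip_c (r t : ℕ) (hr : 0 < r) (ht : ¬ t % (2 * r) < r) :
    bcblock r (t + r) = b := by
  have hlt : t % (2 * r) < 2 * r := Nat.mod_lt _ (by omega)
  unfold bcblock
  rw [Nat.add_mod, Nat.mod_eq_of_lt (show r < 2 * r by omega),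
    show (t % (2 * r) + r) % (2 * r) = t % (2 * r) + r - 2 * r from by
      rw [Nat.mod_eq_sub_mod (by omega)]; exact Nat.mod_eq_of_lt (by omega),
    if_pos (by omega)]

lemma Fw_a1 (y₁ y₂ k : ℕ) (hk : k < y₂ + 1) : Fw y₁ y₂ k = a := by
  unfold Fw; rw [if_pos hk]

lemma Fw_u (y₁ y₂ k : ℕ) (h1 : y₂ + 1 ≤ k) (h2 : k < y₂ + 1 + (y₁ + 1)) :
    Fw y₁ y₂ k = bcblock (y₂ + 1) (k - (y₂ + 1)) := by
  unfold Fw; rw [if_neg (by omega), if_pos h2]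

lemma Fw_a2 (y₁ y₂ k : ℕ) (h1 : y₂ + 1 + (y₁ + 1) ≤ k) (h2 : k < 2 * (y₂ + 1) + (y₁ + 1)) :
    Fw y₁ y₂ k = a := by
  unfold Fw; rw [if_neg (by omega), if_neg (by omega), if_pos h2]

lemma Fw_ubar (y₁ y₂ k : ℕ) (h1 : 2 * (y₂ + 1) + (y₁ + 1) ≤ k) :
    Fw y₁ y₂ k = comp (bcblock (y₂ + 1) (k - (2 * (y₂ + 1) + (y₁ + 1)))) := by
  unfold Fw; rw [if_neg (by omega), if_neg (by omega), if_neg (by omega)]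

/-- The fundamental half-period complementation property. -/
lemma Fw_comp (y₁ y₂ n : ℕ) (hn : n < 2 * (y₁ + y₂ + 2)) :
    Fw y₁ y₂ ((n + (y₁ + y₂ + 2)) % (2 * (y₁ + y₂ + 2))) = comp (Fw y₁ y₂ n) := by
  rcases lt_or_ge n (y₁ + y₂ + 2) with hc | hc
  · have e : (n + (y₁ + y₂ + 2)) % (2 * (y₁ + y₂ + 2)) = n + (y₁ + y₂ + 2) :=
      Nat.mod_eq_of_lt (by omega)
    rw [e]
    rcases lt_or_ge n (y₂ + 1) with h1 | h1
    · rw [Fw_a1 y₁ y₂ n h1, Fw_a2 y₁ y₂ _ (by omega) (by omega)]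
      rfl
    · rw [Fw_u y₁ y₂ n h1 (by omega), Fw_ubar y₁ y₂ _ (by omega),
        show n + (y₁ + y₂ + 2) - (2 * (y₂ + 1) + (y₁ + 1)) = n - (y₂ + 1) by omega]
  · have e : (n + (y₁ + y₂ + 2)) % (2 * (y₁ + y₂ + 2)) = n - (y₁ + y₂ + 2) := by
      rw [Nat.mod_eq_sub_mod (by omega),
        show n + (y₁ + y₂ + 2) - 2 * (y₁ + y₂ + 2) = n - (y₁ + y₂ + 2) by omega]
      exact Nat.mod_eq_of_lt (by omega)
    rw [e]
    rcases lt_or_ge n (2 * (y₂ + 1) + (y₁ + 1)) with h1 | h1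
    · rw [Fw_a2 y₁ y₂ n (by omega) h1, Fw_a1 y₁ y₂ _ (by omega)]
      rfl
    · rw [Fw_ubar y₁ y₂ n h1, Fw_u y₁ y₂ _ (by omega) (by omega),
        show n - (y₁ + y₂ + 2) - (y₂ + 1) = n - (2 * (y₂ + 1) + (y₁ + 1)) by omega,
        comp_comp]

/-- Characterization of the positions of `a`. -/
lemma Fw_a_iff (y₁ y₂ n : ℕ) (hn : n < 2 * (y₁ + y₂ + 2)) :
    Fw y₁ y₂ n = a ↔ n % (y₁ + y₂ + 2) < y₂ + 1 := by
  rcases lt_or_ge n (y₁ + y₂ + 2) with hc | hc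
  · rw [Nat.mod_eq_of_lt hc]
    rcases lt_or_ge n (y₂ + 1) with h1 | h1
    · exact iff_of_true (Fw_a1 y₁ y₂ n h1) h1
    · exact iff_of_false (by rw [Fw_u y₁ y₂ n h1 (by omega)]; exact bcb_ne_a _ _) (by omega)
  · have e : n % (y₁ + y₂ + 2) = n - (y₁ + y₂ + 2) := by
      rw [Nat.mod_eq_sub_mod (by omega)]; exact Nat.mod_eq_of_lt (by omega)
    rw [e]
    rcases lt_or_ge n (2 * (y₂ + 1) + (y₁ + 1)) with h1 | h1
    · exact iff_of_true (Fw_a2 y₁ y₂ n (by omega) h1) (by omega)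
    · exact iff_of_false (by rw [Fw_ubar y₁ y₂ n h1]; exact comp_bcb_ne_a _ _) (by omega)

/-- There are no two `b`'s at distance `y₂ + 1`. -/
lemma Fw_b_step (y₁ y₂ n : ℕ) (hn : n < 2 * (y₁ + y₂ + 2)) (hb : Fw y₁ y₂ n = b) :
    Fw y₁ y₂ ((n + (y₂ + 1)) % (2 * (y₁ + y₂ + 2))) ≠ b := by
  have hr : 0 < y₂ + 1 := Nat.succ_pos _
  rcases lt_or_ge n (y₂ + 1) with h1 | h1
  · rw [Fw_a1 y₁ y₂ n h1] at hb; exact absurd hb (by decide)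
  rcases lt_or_ge n (y₁ + y₂ + 2) with h2 | h2
  · rw [Fw_u y₁ y₂ n h1 (by omega), bcb_b_iff] at hb
    rcases lt_or_ge (n + (y₂ + 1)) (y₂ + 1 + (y₁ + 1)) with h3 | h3
    · rw [Nat.mod_eq_of_lt (show n + (y₂ + 1) < 2 * (y₁ + y₂ + 2) by omega),
        Fw_u y₁ y₂ _ (by omega) h3,
        show n + (y₂ + 1) - (y₂ + 1) = (n - (y₂ + 1)) + (y₂ + 1) by omega,
        bcblock_flip_b _ _ hr hb]
      decide
    · rw [Nat.mod_eq_of_lt (show n + (y₂ + 1) < 2 * (y₁ + y₂ + 2) by omega),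
        Fw_a2 y₁ y₂ _ h3 (by omega)]
      decide
  rcases lt_or_ge n (2 * (y₂ + 1) + (y₁ + 1)) with h3 | h3
  · rw [Fw_a2 y₁ y₂ n (by omega) h3] at hb; exact absurd hb (by decide)
  · rw [Fw_ubar y₁ y₂ n h3, comp_eq_b, bcb_c_iff] at hb
    rcases lt_or_ge (n + (y₂ + 1)) (2 * (y₁ + y₂ + 2)) with h4 | h4
    · rw [Nat.mod_eq_of_lt h4, Fw_ubar y₁ y₂ _ (by omega),
        show n + (y₂ + 1) - (2 * (y₂ + 1) + (y₁ + 1))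
          = (n - (2 * (y₂ + 1) + (y₁ + 1))) + (y₂ + 1) by omega,
        bcblock_flip_c _ _ hr hb]
      decide
    · have e : (n + (y₂ + 1)) % (2 * (y₁ + y₂ + 2)) = n + (y₂ + 1) - 2 * (y₁ + y₂ + 2) := by
        rw [Nat.mod_eq_sub_mod h4]; exact Nat.mod_eq_of_lt (by omega)
      rw [e, Fw_a1 y₁ y₂ _ (by omega)]
      decide

lemma Nlt (P : ℕ) (hP : 0 < P) (i : ℤ) : ((i % (P : ℤ)).toNat) < P := by
  have h1 : 0 ≤ i % (P : ℤ) := Int.emod_nonneg i (by exact_mod_cast hP.ne')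
  have h2 : i % (P : ℤ) < (P : ℤ) := Int.emod_lt_of_pos i (by exact_mod_cast hP)
  omega

lemma Nadd (P : ℕ) (hP : 0 < P) (i : ℤ) (c : ℕ) :
    ((i + (c : ℤ)) % (P : ℤ)).toNat = (((i % (P : ℤ)).toNat) + c) % P := by
  have h0 : (0 : ℤ) ≤ i % (P : ℤ) := Int.emod_nonneg i (by exact_mod_cast hP.ne')
  have key : (i + (c : ℤ)) % (P : ℤ) = ((i % (P : ℤ)) + (c : ℤ)) % (P : ℤ) := by
    conv_lhs => rw [← Int.mul_ediv_add_emod i (P : ℤ)]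
    rw [show (P : ℤ) * (i / (P : ℤ)) + i % (P : ℤ) + (c : ℤ)
        = i % (P : ℤ) + (c : ℤ) + (P : ℤ) * (i / (P : ℤ)) by ring,
      Int.add_mul_emod_self_left]
  rw [key, show (i % (P : ℤ)) = (((i % (P : ℤ)).toNat : ℕ) : ℤ) by omega,
    ← Nat.cast_add, ← Int.natCast_mod, Int.toNat_natCast, Int.toNat_natCast]

/- ----------------- the theorem ----------------- -/

/-- If y₂ ≤ x₁ ≤ x₂ ≤ y₁, there exist p, q > 0 with p + q = m - 1 such that the word
repeating a^p u_q a^p ū_q (u the one-sided word (b^(y₂+1) c^(y₂+1))^ℕ, ū its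
b↔c complement) avoids {b⋄^(m-2)b, c⋄^(m-2)c, a⋄^(m-2)b, a⋄^(m-2)c,
a⋄^(x₁)a⋄^(x₂)a, b⋄^(y₁)c⋄^(y₂)c}. -/
theorem stmt_19 (m x₁ x₂ y₁ y₂ : ℕ) (hm : 4 ≤ m)
    (hx₁ : 1 ≤ x₁) (hx₂ : 1 ≤ x₂) (hy₁ : 1 ≤ y₁) (hy₂ : 1 ≤ y₂)
    (hsx : x₁ + x₂ = m - 3) (hsy : y₁ + y₂ = m - 3)
    (hord : y₂ ≤ x₁ ∧ x₁ ≤ x₂ ∧ x₂ ≤ y₁) :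
    ∃ p q : ℕ, 0 < p ∧ 0 < q ∧ p + q = m - 1 ∧
      ∀ u ∈ ({oneHole m b b, oneHole m c c, oneHole m a b, oneHole m a c,
              twoDef m a a a (x₁ + 1), twoDef m b c c (y₁ + 1)} : Set (PW m ABC)),
        ¬ Meets (periodic (2 * (m - 1)) (fun n =>
          if n < p then a
          else if n < p + q then bcblock (y₂ + 1) (n - p)
          else if n < 2 * p + q then a
          else comp (bcblock (y₂ + 1) (n - (2 * p + q))))) u := by
  obtain ⟨ho1, ho2, ho3⟩ := hord
  have hm1 : m - 1 = y₁ + y₂ + 2 := by omega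
  have hxy : x₁ + x₂ = y₁ + y₂ := by omega
  have hP : 0 < 2 * (y₁ + y₂ + 2) := by omega
  refine ⟨y₂ + 1, y₁ + 1, Nat.succ_pos _, Nat.succ_pos _, by omega, ?_⟩
  intro u hu
  simp only [Set.mem_insert_iff, Set.mem_singleton_iff] at hu
  intro hmeet
  rw [hm1] at hmeet
  obtain ⟨i, hi⟩ := hmeet
  rcases hu with rfl | rfl | rfl | rfl | rfl | rfl
  · -- oneHole m b b
    have h0 : Fw y₁ y₂ (((i + ((0 : ℕ) : ℤ)) % ((2 * (y₁ + y₂ + 2) : ℕ) : ℤ)).toNat) = b :=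
      hi ⟨0, by omega⟩ b rfl
    have h1 : Fw y₁ y₂ (((i + ((m - 1 : ℕ) : ℤ)) % ((2 * (y₁ + y₂ + 2) : ℕ) : ℤ)).toNat) = b :=
      hi ⟨m - 1, by omega⟩ b (by
        show (if (m - 1 : ℕ) = 0 then some b else if (m - 1 : ℕ) = m - 1 then some b else none)
          = some b
        rw [if_neg (by omega), if_pos rfl])
    rw [Nadd _ hP i 0, Nat.add_zero, Nat.mod_eq_of_lt (Nlt _ hP i)] at h0
    rw [hm1, Nadd _ hP i (y₁ + y₂ + 2), Fw_comp y₁ y₂ _ (Nlt _ hP i), h0] at h1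
    exact absurd h1 (by decide)
  · -- oneHole m c c
    have h0 : Fw y₁ y₂ (((i + ((0 : ℕ) : ℤ)) % ((2 * (y₁ + y₂ + 2) : ℕ) : ℤ)).toNat) = c :=
      hi ⟨0, by omega⟩ c rfl
    have h1 : Fw y₁ y₂ (((i + ((m - 1 : ℕ) : ℤ)) % ((2 * (y₁ + y₂ + 2) : ℕ) : ℤ)).toNat) = c :=
      hi ⟨m - 1, by omega⟩ c (by
        show (if (m - 1 : ℕ) = 0 then some c else if (m - 1 : ℕ) = m - 1 then some c else none)
          = some c
        rw [if_neg (by omega), if_pos rfl])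
    rw [Nadd _ hP i 0, Nat.add_zero, Nat.mod_eq_of_lt (Nlt _ hP i)] at h0
    rw [hm1, Nadd _ hP i (y₁ + y₂ + 2), Fw_comp y₁ y₂ _ (Nlt _ hP i), h0] at h1
    exact absurd h1 (by decide)
  · -- oneHole m a b
    have h0 : Fw y₁ y₂ (((i + ((0 : ℕ) : ℤ)) % ((2 * (y₁ + y₂ + 2) : ℕ) : ℤ)).toNat) = a :=
      hi ⟨0, by omega⟩ a rfl
    have h1 : Fw y₁ y₂ (((i + ((m - 1 : ℕ) : ℤ)) % ((2 * (y₁ + y₂ + 2) : ℕ) : ℤ)).toNat) = b :=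
      hi ⟨m - 1, by omega⟩ b (by
        show (if (m - 1 : ℕ) = 0 then some a else if (m - 1 : ℕ) = m - 1 then some b else none)
          = some b
        rw [if_neg (by omega), if_pos rfl])
    rw [Nadd _ hP i 0, Nat.add_zero, Nat.mod_eq_of_lt (Nlt _ hP i)] at h0
    rw [hm1, Nadd _ hP i (y₁ + y₂ + 2), Fw_comp y₁ y₂ _ (Nlt _ hP i), h0] at h1
    exact absurd h1 (by decide)
  · -- oneHole m a c
    have h0 : Fw y₁ y₂ (((i + ((0 : ℕ) : ℤ)) % ((2 * (y₁ + y₂ + 2) : ℕ) : ℤ)).toNat) = a :=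
      hi ⟨0, by omega⟩ a rfl
    have h1 : Fw y₁ y₂ (((i + ((m - 1 : ℕ) : ℤ)) % ((2 * (y₁ + y₂ + 2) : ℕ) : ℤ)).toNat) = c :=
      hi ⟨m - 1, by omega⟩ c (by
        show (if (m - 1 : ℕ) = 0 then some a else if (m - 1 : ℕ) = m - 1 then some c else none)
          = some c
        rw [if_neg (by omega), if_pos rfl])
    rw [Nadd _ hP i 0, Nat.add_zero, Nat.mod_eq_of_lt (Nlt _ hP i)] at h0
    rw [hm1, Nadd _ hP i (y₁ + y₂ + 2), Fw_comp y₁ y₂ _ (Nlt _ hP i), h0] at h1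
    exact absurd h1 (by decide)
  · -- twoDef m a a a (x₁ + 1)
    have h0 : Fw y₁ y₂ (((i + ((0 : ℕ) : ℤ)) % ((2 * (y₁ + y₂ + 2) : ℕ) : ℤ)).toNat) = a :=
      hi ⟨0, by omega⟩ a rfl
    have h1 : Fw y₁ y₂ (((i + ((x₁ + 1 : ℕ) : ℤ)) % ((2 * (y₁ + y₂ + 2) : ℕ) : ℤ)).toNat) = a :=
      hi ⟨x₁ + 1, by omega⟩ a (by
        show (if (x₁ + 1 : ℕ) = 0 then some a else if (x₁ + 1 : ℕ) = x₁ + 1 then some a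
          else if (x₁ + 1 : ℕ) = m - 1 then some a else none) = some a
        rw [if_neg (by omega), if_pos rfl])
    rw [Nadd _ hP i 0, Nat.add_zero, Nat.mod_eq_of_lt (Nlt _ hP i)] at h0
    rw [Nadd _ hP i (x₁ + 1)] at h1
    rw [Fw_a_iff y₁ y₂ _ (Nlt _ hP i)] at h0
    rw [Fw_a_iff y₁ y₂ _ (Nat.mod_lt _ hP)] at h1
    rw [Nat.mod_mod_of_dvd _ ⟨2, by ring⟩, Nat.add_mod,
      Nat.mod_eq_of_lt (show x₁ + 1 < y₁ + y₂ + 2 by omega),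
      Nat.mod_eq_of_lt
        (show (i % ((2 * (y₁ + y₂ + 2) : ℕ) : ℤ)).toNat % (y₁ + y₂ + 2) + (x₁ + 1)
          < y₁ + y₂ + 2 by omega)] at h1
    omega
  · -- twoDef m b c c (y₁ + 1)
    have h0 : Fw y₁ y₂ (((i + ((0 : ℕ) : ℤ)) % ((2 * (y₁ + y₂ + 2) : ℕ) : ℤ)).toNat) = b :=
      hi ⟨0, by omega⟩ b rfl
    have h1 : Fw y₁ y₂ (((i + ((y₁ + 1 : ℕ) : ℤ)) % ((2 * (y₁ + y₂ + 2) : ℕ) : ℤ)).toNat) = c :=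
      hi ⟨y₁ + 1, by omega⟩ c (by
        show (if (y₁ + 1 : ℕ) = 0 then some b else if (y₁ + 1 : ℕ) = y₁ + 1 then some c
          else if (y₁ + 1 : ℕ) = m - 1 then some c else none) = some c
        rw [if_neg (by omega), if_pos rfl])
    rw [Nadd _ hP i 0, Nat.add_zero, Nat.mod_eq_of_lt (Nlt _ hP i)] at h0
    rw [Nadd _ hP i (y₁ + 1)] at h1
    have h2 := Fw_comp y₁ y₂ _ (Nat.mod_lt ((i % ((2 * (y₁ + y₂ + 2) : ℕ) : ℤ)).toNat + (y₁ + 1)) hP)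
    rw [h1] at h2
    have h2' : Fw y₁ y₂
        ((((i % ((2 * (y₁ + y₂ + 2) : ℕ) : ℤ)).toNat + (y₁ + 1)) % (2 * (y₁ + y₂ + 2))
          + (y₁ + y₂ + 2)) % (2 * (y₁ + y₂ + 2))) = b := h2
    rw [Nat.mod_add_mod] at h2'
    have hstep := Fw_b_step y₁ y₂ _ (Nat.mod_lt _ hP) h2'
    rw [Nat.mod_add_mod,
      show (i % ((2 * (y₁ + y₂ + 2) : ℕ) : ℤ)).toNat + (y₁ + 1) + (y₁ + y₂ + 2) + (y₂ + 1)
        = (i % ((2 * (y₁ + y₂ + 2) : ℕ) : ℤ)).toNat + 2 * (y₁ + y₂ + 2) by ring,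
      Nat.add_mod_right, Nat.mod_eq_of_lt (Nlt _ hP i)] at hstep
    exact hstep h0
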